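/- If A, B, and C are closed under stuttering, then □(↑A ⇒ ○B ∨ C) is closed under stuttering, where ↑A := ¬A ∧ ○A. -/

import Mathlib

def State := String → Bool

def StSeq := ℕ → State

def drop (k : ℕ) (s : StSeq) : StSeq := fun n => s (k + n)

def stutter (s : StSeq) (i : ℕ) : StSeq := fun n => if n ≤ i then s n else s (n - 1)

def CUS (F : StSeq → Prop) : Prop := ∀ (s : StSeq) (i : ℕ), F s ↔ F (stutter s i)

def Var (a : String) : StSeq → Prop := fun s => s 0 a = true

def Not' (F : StSeq → Prop) : StSeq → Prop := fun s => ¬ F s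

def And' (F G : StSeq → Prop) : StSeq → Prop := fun s => F s ∧ G s

def Or' (F G : StSeq → Prop) : StSeq → Prop := fun s => F s ∨ G s

def Imp' (F G : StSeq → Prop) : StSeq → Prop := fun s => F s → G s

def Iff' (F G : StSeq → Prop) : StSeq → Prop := fun s => F s ↔ G s

def Next (F : StSeq → Prop) : StSeq → Prop := fun s => F (drop 1 s)

def Always (F : StSeq → Prop) : StSeq → Prop := fun s => ∀ k, F (drop k s)

def Ev (F : StSeq → Prop) : StSeq → Prop := fun s => ∃ k, F (drop k s)

def Until' (F G : StSeq → Prop) : StSeq → Prop :=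
  fun s => ∃ k, G (drop k s) ∧ ∀ j < k, F (drop j s)

def Up (F : StSeq → Prop) : StSeq → Prop := And' (Not' F) (Next F)

def Down (F : StSeq → Prop) : StSeq → Prop := And' F (Next (Not' F))

def AnyEdge (F : StSeq → Prop) : StSeq → Prop := Or' (Up F) (Down F)

/-! A suffix of a stuttered sequence is either a suffix of the original sequence (if it starts
after the repeated state) or a stuttering of a suffix. So `□G` is closed under stuttering as soon
as `G` is invariant under stuttering at positive positions and preserved by stuttering at `0`.
For `G = ↑A ⇒ ○B ∨ C`, stuttering at position `j ≥ 1` is stuttering at `j - 1` after one step,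
so invariance follows from that of `A`, `B`, `C`; and after stuttering at `0` the first two states
coincide, so `↑A` fails and `G` holds trivially. -/

lemma drop_stutter_of_le (s : StSeq) {i k : ℕ} (h : k ≤ i) :
    drop k (stutter s i) = stutter (drop k s) (i - k) := by
  funext n
  simp only [drop, stutter]
  split_ifs <;> first | omega | exact congrArg s (by omega)

lemma drop_stutter_of_lt (s : StSeq) {i k : ℕ} (h : i < k) :
    drop k (stutter s i) = drop (k - 1) s := by
  funext n
  simp only [drop, stutter]
  rw [if_neg (by omega)]
  exact congrArg s (by omega)

lemma drop_zero (s : StSeq) : drop 0 s = s := by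
  funext n
  simp [drop]

lemma drop_one_stutter_zero (s : StSeq) : drop 1 (stutter s 0) = s := by
  rw [drop_stutter_of_lt s zero_lt_one, Nat.sub_self, drop_zero]

lemma CUS.next_stutter_iff {F : StSeq → Prop} (hF : CUS F) (s : StSeq) {j : ℕ} (hj : 0 < j) :
    Next F (stutter s j) ↔ Next F s := by
  simp only [Next, drop_stutter_of_le s hj]
  exact (hF _ _).symm

lemma CUS.not_up_stutter_zero {F : StSeq → Prop} (hF : CUS F) (s : StSeq) :
    ¬ Up F (stutter s 0) := by
  rintro ⟨hnot, hnext⟩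
  simp only [Next, drop_one_stutter_zero] at hnext
  exact hnot ((hF s 0).mp hnext)

lemma cus_always_of_stutter {G : StSeq → Prop}
    (hpos : ∀ s j, 0 < j → (G s ↔ G (stutter s j)))
    (hzero : ∀ s, G s → G (stutter s 0)) : CUS (Always G) := by
  intro s i
  constructor
  · intro hs k
    rcases le_or_gt k i with hki | hik
    · rw [drop_stutter_of_le s hki]
      rcases Nat.eq_zero_or_pos (i - k) with hzero_gap | hgap
      · rw [hzero_gap]
        exact hzero _ (hs k)
      · exact (hpos _ _ hgap).mp (hs k)
    · rw [drop_stutter_of_lt s hik]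
      exact hs (k - 1)
  · intro hs k
    rcases lt_or_ge k i with hki | hik
    · have hsk := hs k
      rw [drop_stutter_of_le s hki.le] at hsk
      exact (hpos _ _ (Nat.sub_pos_of_lt hki)).mpr hsk
    · have hsk := hs (k + 1)
      rwa [drop_stutter_of_lt s (Nat.lt_add_one_of_le hik), Nat.add_sub_cancel] at hsk

theorem prop2 (A B C : StSeq → Prop) (hA : CUS A) (hB : CUS B) (hC : CUS C) :
    CUS (Always (Imp' (Up A) (Or' (Next B) C))) := by
  apply cus_always_of_stutter
  · intro s j hj
    simp only [Imp', Up, And', Not', Or', hA.next_stutter_iff s hj, hB.next_stutter_iff s hj,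
      ← hA s j, ← hC s j]
  · intro s _ hup
    exact absurd hup (hA.not_up_stutter_zero s)
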